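/- Let G be a simple graph with no induced P_2 + P_3. Suppose G contains an induced 4-cycle on vertices v_1, v_2, v_3, v_4 in cyclic order. Let W_1 be the set of vertices adjacent to v_1 and to no other cycle vertex, and let X be the set of vertices with no neighbour on the cycle. Then W_1 ∪ X is an independent set. -/
import Mathlib


/-- `G` contains an induced copy of `H`. -/
def HasInducedCopy {α β : Type*} (H : SimpleGraph α) (G : SimpleGraph β) : Prop :=
  ∃ f : α ↪ β, ∀ a b : α, G.Adj (f a) (f b) ↔ H.Adj a b

/-- `P₂ + P₃`: the edge `{0,1}` and the path `2-3-4`. -/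
def p2PlusP3 : SimpleGraph (Fin 5) :=
  SimpleGraph.fromRel (fun a b => (a = 0 ∧ b = 1) ∨ (a = 2 ∧ b = 3) ∨ (a = 3 ∧ b = 4))

theorem stmt10 {V : Type*} [Fintype V] (G : SimpleGraph V)
    (hp2p3 : ¬ HasInducedCopy p2PlusP3 G)
    (v : Fin 4 → V) (hinj : Function.Injective v)
    (hcyc : ∀ i j : Fin 4, G.Adj (v i) (v j) ↔ (j = i + 1 ∨ i = j + 1)) :
    ∀ x y : V,
      (x ∉ Set.range v ∧
        ((G.Adj x (v 0) ∧ ¬ G.Adj x (v 1) ∧ ¬ G.Adj x (v 2) ∧ ¬ G.Adj x (v 3)) ∨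
          (∀ i : Fin 4, ¬ G.Adj x (v i)))) →
      (y ∉ Set.range v ∧
        ((G.Adj y (v 0) ∧ ¬ G.Adj y (v 1) ∧ ¬ G.Adj y (v 2) ∧ ¬ G.Adj y (v 3)) ∨
          (∀ i : Fin 4, ¬ G.Adj y (v i)))) →
      x ≠ y → ¬ G.Adj x y := by
  rintro x y ⟨hxr, hx⟩ ⟨hyr, hy⟩ hxy hadj
  have hx1 : ¬G.Adj x (v 1) := by rcases hx with ⟨_, h, _, _⟩ | h; exacts [h, h 1]
  have hx2 : ¬G.Adj x (v 2) := by rcases hx with ⟨_, _, h, _⟩ | h; exacts [h, h 2]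
  have hx3 : ¬G.Adj x (v 3) := by rcases hx with ⟨_, _, _, h⟩ | h; exacts [h, h 3]
  have hy1 : ¬G.Adj y (v 1) := by rcases hy with ⟨_, h, _, _⟩ | h; exacts [h, h 1]
  have hy2 : ¬G.Adj y (v 2) := by rcases hy with ⟨_, _, h, _⟩ | h; exacts [h, h 2]
  have hy3 : ¬G.Adj y (v 3) := by rcases hy with ⟨_, _, _, h⟩ | h; exacts [h, h 3]
  have hxv : ∀ i : Fin 4, x ≠ v i := fun i h => hxr ⟨i, h.symm⟩
  have hyv : ∀ i : Fin 4, y ≠ v i := fun i h => hyr ⟨i, h.symm⟩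
  set f : Fin 5 → V := ![x, y, v 1, v 2, v 3] with hf
  have finj : Function.Injective f := by
    intro a b hab
    fin_cases a <;> fin_cases b <;>
      simp_all [f, hinj.ne_iff] <;>
      first
      | rfl
      | exact absurd hab (hxv _)
      | exact absurd hab (hyv _)
      | exact absurd hab.symm (hxv _)
      | exact absurd hab.symm (hyv _)
      | exact absurd hab hxy
      | exact absurd hab.symm hxy
      | exact absurd (hinj hab) (by decide)
  apply hp2p3
  refine ⟨⟨f, finj⟩, fun a b => ?_⟩
  have h12 : G.Adj (v 1) (v 2) := (hcyc 1 2).2 (Or.inl rfl)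
  have h23 : G.Adj (v 2) (v 3) := (hcyc 2 3).2 (Or.inl rfl)
  have h13 : ¬G.Adj (v 1) (v 3) := fun h => by
    rcases (hcyc 1 3).1 h with h | h <;> exact absurd h (by decide)
  have h31 : ¬G.Adj (v 3) (v 1) := fun h => h13 h.symm
  have hx1' : ¬G.Adj (v 1) x := fun h => hx1 h.symm
  have hx2' : ¬G.Adj (v 2) x := fun h => hx2 h.symm
  have hx3' : ¬G.Adj (v 3) x := fun h => hx3 h.symm
  have hy1' : ¬G.Adj (v 1) y := fun h => hy1 h.symm
  have hy2' : ¬G.Adj (v 2) y := fun h => hy2 h.symm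
  have hy3' : ¬G.Adj (v 3) y := fun h => hy3 h.symm
  fin_cases a <;> fin_cases b <;>
    simp [f, p2PlusP3, SimpleGraph.fromRel_adj, hadj, hadj.symm, hx1, hx2, hx3, hy1, hy2, hy3,
      h12, h12.symm, h23, h23.symm, h13, h31, hx1', hx2', hx3', hy1', hy2', hy3', G.irrefl]
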